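/- The recognizable tree languages are closed under tree concatenation: if n ≥ 1, a_1,…,a_n ∈ Σ_0 are pairwise distinct, and L_0, L_1,…,L_n ⊆ T_Σ are recognizable tree languages, then the tree concatenation L_0⟨a_1←L_1,…,a_n←L_n⟩ is recognizable. -/
import Mathlib


inductive RTree (σ : ℕ → Type) : Type
  | node {k : ℕ} (a : σ k) (ts : Fin k → RTree σ) : RTree σ

def RTree.leaf {σ : ℕ → Type} (a : σ 0) : RTree σ := .node a Fin.elim0

/-- Deterministic bottom-up finite tree automaton. -/
structure DBUA (σ : ℕ → Type) (Q : Type) where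
  δ : ∀ k, σ k → (Fin k → Q) → Q
  F : Set Q

def DBUA.run {σ : ℕ → Type} {Q : Type} (M : DBUA σ Q) : RTree σ → Q
  | .node a ts => M.δ _ a fun i => M.run (ts i)

def DBUA.lang {σ : ℕ → Type} {Q : Type} (M : DBUA σ Q) : Set (RTree σ) :=
  {t | M.run t ∈ M.F}

/-- A tree language is recognizable if it is recognized by some deterministic
bottom-up finite tree automaton with finitely many states. -/
def Recognizable {σ : ℕ → Type} (L : Set (RTree σ)) : Prop :=
  ∃ (Q : Type) (_ : Fintype Q) (M : DBUA σ Q), L = M.lang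

/-- `SubstRel g t s` holds iff `s` can be obtained from `t` by replacing each
rank-0 leaf labeled `a` by some tree of `g a` (different occurrences may be
replaced by different trees). -/
inductive SubstRel {σ : ℕ → Type} (g : σ 0 → Set (RTree σ)) :
    RTree σ → RTree σ → Prop
  | leaf {a : σ 0} {ts : Fin 0 → RTree σ} {s : RTree σ} :
      s ∈ g a → SubstRel g (.node a ts) s
  | node {k : ℕ} {a : σ (k + 1)} {ts ss : Fin (k + 1) → RTree σ} :
      (∀ i, SubstRel g (ts i) (ss i)) → SubstRel g (.node a ts) (.node a ss)

/-- The tree concatenation of a tree language `L` with the languages `g a`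
substituted at the rank-0 symbols `a`. -/
def treeConcat {σ : ℕ → Type} (L : Set (RTree σ)) (g : σ 0 → Set (RTree σ)) :
    Set (RTree σ) :=
  {s | ∃ t ∈ L, SubstRel g t s}

private lemma fin0_eq {X : Type*} (f : Fin 0 → X) : f = Fin.elim0 :=
  funext fun j => j.elim0

/-- Theorem 3.35: the recognizable tree languages are closed under tree
concatenation `L₀⟨a₁ ← L₁, …, a_n ← L_n⟩` (at pairwise distinct rank-0
symbols `a₁, …, a_n`; rank-0 symbols not among them are kept unchanged). -/
theorem recognizable_closed_treeConcat {σ : ℕ → Type} (n : ℕ) (hn : 1 ≤ n)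
    (a : Fin n → σ 0) (ha : Function.Injective a)
    (L₀ : Set (RTree σ)) (L : Fin n → Set (RTree σ))
    (h₀ : Recognizable L₀) (h : ∀ i, Recognizable (L i)) :
    Recognizable (treeConcat L₀ fun b =>
      {s | (∃ i, a i = b ∧ s ∈ L i) ∨ ((∀ i, a i ≠ b) ∧ s = RTree.leaf b)}) := by
  classical
  obtain ⟨Q₀, _inst₀, M₀, hM₀⟩ := h₀
  choose Qi fin Mi hMi using h
  haveI : ∀ i, Fintype (Qi i) := fin
  set g : σ 0 → Set (RTree σ) := fun b =>
    {s | (∃ i, a i = b ∧ s ∈ L i) ∨ ((∀ i, a i ≠ b) ∧ s = RTree.leaf b)} with hg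
  let P : DBUA σ (Set Q₀ × ∀ i, Qi i) :=
    { δ := fun k => match k with
        | 0 => fun b _ =>
            ({q | (∃ i, (Mi i).δ 0 b Fin.elim0 ∈ (Mi i).F ∧
                     q = M₀.δ 0 (a i) Fin.elim0) ∨
                  ((∀ i, a i ≠ b) ∧ q = M₀.δ 0 b Fin.elim0)},
             fun i => (Mi i).δ 0 b Fin.elim0)
        | (k+1) => fun b qs =>
            ({q | (∃ f : Fin (k+1) → Q₀, (∀ j, f j ∈ (qs j).1) ∧ q = M₀.δ (k+1) b f) ∨
                  (∃ i, (Mi i).δ (k+1) b (fun j => (qs j).2 i) ∈ (Mi i).F ∧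
                     q = M₀.δ 0 (a i) Fin.elim0)},
             fun i => (Mi i).δ (k+1) b fun j => (qs j).2 i),
      F := {q | ∃ q₀ ∈ q.1, q₀ ∈ M₀.F} }
  have hsnd : ∀ (s : RTree σ) (i : Fin n), (P.run s).2 i = (Mi i).run s := by
    intro s
    induction s with
    | @node k b ts ih =>
      intro i
      cases k with
      | zero =>
        simp only [DBUA.run, P]
        congr 1
        exact (fin0_eq _).symm
      | succ k =>
        simp only [DBUA.run, P]
        congr 1
        funext j
        exact ih j i
  have hfst : ∀ s : RTree σ,
      (P.run s).1 = {q | ∃ t, SubstRel g t s ∧ M₀.run t = q} := by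
    intro s
    induction s with
    | @node k b ts ih =>
      cases k with
      | zero =>
        ext q
        simp only [DBUA.run, P, Set.mem_setOf_eq]
        constructor
        · rintro (⟨i, hF, rfl⟩ | ⟨hnot, rfl⟩)
          · refine ⟨.node (a i) Fin.elim0, SubstRel.leaf ?_, ?_⟩
            · refine Or.inl ⟨i, rfl, ?_⟩
              rw [hMi i]
              show (Mi i).run (.node b ts) ∈ (Mi i).F
              simp only [DBUA.run]
              rwa [fin0_eq (fun j => (Mi i).run (ts j))]
            · simp only [DBUA.run]
              rw [fin0_eq (fun j => M₀.run (Fin.elim0 j))]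
          · refine ⟨.node b Fin.elim0, SubstRel.leaf ?_, ?_⟩
            · refine Or.inr ⟨hnot, ?_⟩
              show RTree.node b ts = RTree.leaf b
              rw [RTree.leaf, fin0_eq ts]
            · simp only [DBUA.run]
              rw [fin0_eq (fun j => M₀.run (Fin.elim0 j))]
        · rintro ⟨t, hsub, rfl⟩
          cases hsub with
          | @leaf a' ts' _ hs =>
            rcases hs with ⟨i, hab, hsL⟩ | ⟨hnot, hleaf⟩
            · refine Or.inl ⟨i, ?_, ?_⟩
              · rw [hMi i] at hsL
                have : (Mi i).run (.node b ts) ∈ (Mi i).F := hsL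
                simp only [DBUA.run] at this
                rwa [fin0_eq (fun j => (Mi i).run (ts j))] at this
              · rw [← hab]
                simp only [DBUA.run]
                rw [fin0_eq (fun j => M₀.run (ts' j))]
            · have hb : a' = b := by
                rw [RTree.leaf] at hleaf
                cases hleaf
                rfl
              subst hb
              refine Or.inr ⟨hnot, ?_⟩
              simp only [DBUA.run]
              rw [fin0_eq (fun j => M₀.run (ts' j))]
      | succ k =>
        ext q
        simp only [DBUA.run, P, Set.mem_setOf_eq]
        constructor
        · rintro (⟨f, hf, rfl⟩ | ⟨i, hF, rfl⟩)
          · have : ∀ j, ∃ t, SubstRel g t (ts j) ∧ M₀.run t = f j := by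
              intro j
              have := hf j
              rw [ih j] at this
              exact this
            choose u hu₁ hu₂ using this
            refine ⟨.node b u, SubstRel.node hu₁, ?_⟩
            simp only [DBUA.run]
            congr 1
            funext j
            exact hu₂ j
          · refine ⟨.node (a i) Fin.elim0, SubstRel.leaf ?_, ?_⟩
            · refine Or.inl ⟨i, rfl, ?_⟩
              rw [hMi i]
              show (Mi i).run (.node b ts) ∈ (Mi i).F
              simp only [DBUA.run]
              have : (fun j => (Mi i).run (ts j)) = fun j => (P.run (ts j)).2 i := by
                funext j; rw [hsnd]
              rwa [this]
            · simp only [DBUA.run]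
              rw [fin0_eq (fun j => M₀.run (Fin.elim0 j))]
        · rintro ⟨t, hsub, rfl⟩
          cases hsub with
          | @leaf a' ts' _ hs =>
            rcases hs with ⟨i, hab, hsL⟩ | ⟨hnot, hleaf⟩
            · refine Or.inr ⟨i, ?_, ?_⟩
              · rw [hMi i] at hsL
                have h1 : (Mi i).run (.node b ts) ∈ (Mi i).F := hsL
                simp only [DBUA.run] at h1
                have : (fun j => (Mi i).run (ts j)) = fun j => (P.run (ts j)).2 i := by
                  funext j; rw [hsnd]
                rwa [this] at h1
              · rw [← hab]
                simp only [DBUA.run]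
                rw [fin0_eq (fun j => M₀.run (ts' j))]
            · exact absurd hleaf (by simp [RTree.leaf])
          | @node k' a' ts' ss' hss =>
            refine Or.inl ⟨fun j => M₀.run (ts' j), ?_, ?_⟩
            · intro j
              rw [ih j]
              exact ⟨ts' j, hss j, rfl⟩
            · simp only [DBUA.run]
        done
  refine ⟨Set Q₀ × ∀ i, Qi i, Fintype.ofFinite _, P, ?_⟩
  ext s
  simp only [treeConcat, DBUA.lang, Set.mem_setOf_eq, hfst, hM₀, DBUA.lang, P]
  constructor
  · rintro ⟨t, ht, hsub⟩
    exact ⟨M₀.run t, ⟨t, hsub, rfl⟩, ht⟩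
  · rintro ⟨q₀, ⟨t, hsub, rfl⟩, hF⟩
    exact ⟨t, hF, hsub⟩
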